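/- arXiv:1512.03355 — 3 statements merged into one kernel-verified Lean document; each statement's English description precedes it below -/
import Mathlib

section
/- For any Lebesgue measurable function f : ℝ^d → [0,∞] with |{x : f(x) > t}| < ∞ for all t > 0, and any t > 0, the integral of the decreasing rearrangement f_* over (0,t) equals the supremum of ∫_A f over all Lebesgue measurable sets A ⊆ ℝ^d with |A| = t. -/
open MeasureTheory Set Pointwise
open scoped ENNReal
noncomputable section

abbrev Euc (d : ℕ) := EuclideanSpace ℝ (Fin d)

/-- `gowersPow d k f = ‖f‖_{U_k}^{2^k}` for `k ≥ 1`, defined inductively. -/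
noncomputable def gowersPow (d : ℕ) : ℕ → (Euc d → ℝ) → ℝ
  | 0, f => (∫ x, f x) ^ 2
  | 1, f => (∫ x, f x) ^ 2
  | (k+2), f => ∫ s, gowersPow d (k+1) (fun x => f x * f (x + s))

/-- The Gowers norm `‖f‖_{U_k}`. -/
noncomputable def gowersNorm (d k : ℕ) (f : Euc d → ℝ) : ℝ :=
  gowersPow d k f ^ ((1 : ℝ) / 2 ^ k)

/-- An ellipsoid: affine image of a closed ball (possibly empty). -/
def IsEllipsoid {d : ℕ} (E : Set (Euc d)) : Prop :=
  ∃ (φ : Euc d ≃ᵃ[ℝ] Euc d) (r : ℝ), E = φ '' Metric.closedBall 0 r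

/-- Indicator function of a set. -/
def ind {d : ℕ} (E : Set (Euc d)) : Euc d → ℝ := Set.indicator E 1

/-- `autocorr E s = |E ∩ (E + s)|`. -/
def autocorr {d : ℕ} (E : Set (Euc d)) : Euc d → ℝ :=
  fun s => (volume (E ∩ ((fun x => x + s) '' E))).toReal

/-- `gs` is the decreasing rearrangement on `(0,∞)` of `g : ℝ^d → [0,∞)`:
right-continuous, nonincreasing, equimeasurable with `g` for a.e. level. -/
def IsDecRearr {d : ℕ} (g : Euc d → ℝ) (gs : ℝ → ℝ) : Prop :=
  (∀ s t : ℝ, 0 < s → s ≤ t → gs t ≤ gs s) ∧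
  (∀ t : ℝ, 0 < t → ContinuousWithinAt gs (Ici t) t) ∧
  (∀ᵐ α ∂(volume.restrict (Ioi (0:ℝ))),
    volume {s ∈ Ioi (0:ℝ) | α < gs s} = volume {x | α < g x})

/-! By the layer cake formula, `∫_A f = ∫_0^∞ |{f > α} ∩ A| dα ≤ ∫_0^∞ min (|A|, |{f > α}|) dα`,
with equality as soon as `{f > b} ⊆ A ⊆ {f ≥ b}` for some level `b`. Lebesgue measure takes
every value in `[0, |s|]` on measurable subsets of `s`, so such an `A` with `|A| = t` exists:
fill `{f > b}` up with part of `{f = b}`, where `b` is the smallest level with `|{f > b}| ≤ t`.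
For the nonincreasing `f_*` the interval `(0, t)` is such a set, so both sides equal
`∫_0^∞ min (t, |{f > α}|) dα` by equimeasurability. -/

open Filter Topology Metric

theorem volume_Ioi_inter_ofReal_lt (c : ℝ≥0∞) :
    volume (Ioi (0 : ℝ) ∩ {α | ENNReal.ofReal α < c}) = c := by
  rcases eq_or_ne c ∞ with rfl | hc
  · simp [Real.volume_Ioi]
  · have : Ioi (0 : ℝ) ∩ {α | ENNReal.ofReal α < c} = Ioo 0 c.toReal := by
      ext α
      simp only [mem_inter_iff, mem_Ioi, mem_ofPred_eq, mem_Ioo, and_congr_right_iff]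
      exact fun hα => ENNReal.ofReal_lt_iff_lt_toReal hα.le hc
    rw [this, Real.volume_Ioo, sub_zero, ENNReal.ofReal_toReal hc]

theorem lintegral_eq_lintegral_measure_ofReal_lt {α : Type*} [MeasurableSpace α]
    (μ : Measure α) [SFinite μ] {g : α → ℝ≥0∞} (hg : Measurable g) :
    ∫⁻ x, g x ∂μ = ∫⁻ a in Ioi 0, μ {x | ENNReal.ofReal a < g x} := by
  have hS : MeasurableSet {p : α × ℝ | ENNReal.ofReal p.2 < g p.1} :=
    measurableSet_lt (ENNReal.measurable_ofReal.comp measurable_snd) (hg.comp measurable_fst)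
  have h := Measure.prod_apply_symm (μ := μ) (ν := volume.restrict (Ioi 0)) hS
  rw [Measure.prod_apply hS] at h
  refine (lintegral_congr fun x => ?_).trans h
  rw [Measure.restrict_apply' measurableSet_Ioi, inter_comm]
  exact (volume_Ioi_inter_ofReal_lt (g x)).symm

section Superlevel

variable {α : Type*} [MeasurableSpace α] {μ : Measure α} {f : α → ℝ≥0∞}

theorem measure_lt_inter_eq_min {A : Set α} {b : ℝ≥0∞} (hbA : {x | b < f x} ⊆ A)
    (hAb : A ⊆ {x | b ≤ f x}) (c : ℝ≥0∞) :
    μ ({x | c < f x} ∩ A) = min (μ A) (μ {x | c < f x}) := by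
  rcases lt_or_ge c b with hcb | hbc
  · have hA : A ⊆ {x | c < f x} := fun x hx => hcb.trans_le (hAb hx)
    rw [inter_eq_right.2 hA, min_eq_left (measure_mono hA)]
  · have hA : {x | c < f x} ⊆ A := fun x hx => hbA (hbc.trans_lt hx)
    rw [inter_eq_left.2 hA, min_eq_right (measure_mono hA)]

theorem setLIntegral_eq_lintegral_measure_inter [SFinite μ] (hf : Measurable f) (A : Set α) :
    ∫⁻ x in A, f x ∂μ = ∫⁻ a in Ioi 0, μ ({x | ENNReal.ofReal a < f x} ∩ A) := by
  rw [lintegral_eq_lintegral_measure_ofReal_lt _ hf]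
  exact lintegral_congr fun a => Measure.restrict_apply (hf measurableSet_Ioi)

theorem setLIntegral_le_lintegral_min_measure [SFinite μ] (hf : Measurable f) (A : Set α) :
    ∫⁻ x in A, f x ∂μ ≤ ∫⁻ a in Ioi 0, min (μ A) (μ {x | ENNReal.ofReal a < f x}) := by
  rw [setLIntegral_eq_lintegral_measure_inter hf]
  exact lintegral_mono fun a =>
    le_min (measure_mono inter_subset_right) (measure_mono inter_subset_left)

theorem setLIntegral_eq_lintegral_min_measure [SFinite μ] (hf : Measurable f) {A : Set α}
    {b : ℝ≥0∞} (hbA : {x | b < f x} ⊆ A) (hAb : A ⊆ {x | b ≤ f x}) :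
    ∫⁻ x in A, f x ∂μ = ∫⁻ a in Ioi 0, min (μ A) (μ {x | ENNReal.ofReal a < f x}) := by
  rw [setLIntegral_eq_lintegral_measure_inter hf]
  simp_rw [measure_lt_inter_eq_min hbA hAb]

theorem measure_lt_le_of_forall_gt {b t : ℝ≥0∞} (h : ∀ c, b < c → μ {x | c < f x} ≤ t) :
    μ {x | b < f x} ≤ t := by
  rcases eq_or_ne b ∞ with rfl | hb
  · simp
  obtain ⟨u, hu_anti, hu_gt, hu_lim⟩ := exists_seq_strictAnti_tendsto' hb.lt_top
  have hunion : {x | b < f x} = ⋃ n, {x | u n < f x} := by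
    ext x
    simp only [mem_ofPred_eq, mem_iUnion]
    exact ⟨fun hx => (hu_lim.eventually (gt_mem_nhds hx)).exists,
      fun ⟨n, hn⟩ => (hu_gt n).1.trans hn⟩
  have hmono : Monotone fun n => {x | u n < f x} := fun m n hmn x hx =>
    (hu_anti.antitone hmn).trans_lt hx
  rw [hunion, hmono.measure_iUnion]
  exact iSup_le fun n => h _ (hu_gt n).1

theorem le_measure_le_of_forall_lt (hf : Measurable f) {b t c₀ : ℝ≥0∞} (hc₀ : c₀ < b)
    (hfin : μ {x | c₀ < f x} ≠ ∞) (h : ∀ c < b, t ≤ μ {x | c < f x}) :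
    t ≤ μ {x | b ≤ f x} := by
  obtain ⟨u, hu_mono, hu_lt, hu_lim⟩ := exists_seq_strictMono_tendsto' hc₀
  have hinter : {x | b ≤ f x} = ⋂ n, {x | u n < f x} := by
    ext x
    simp only [mem_ofPred_eq, mem_iInter]
    exact ⟨fun hx n => (hu_lt n).2.trans_le hx,
      fun hx => le_of_tendsto' hu_lim fun n => (hx n).le⟩
  have hanti : Antitone fun n => {x | u n < f x} := fun m n hmn x hx =>
    (hu_mono.monotone hmn).trans_lt hx
  rw [hinter, hanti.measure_iInter (fun n => (hf measurableSet_Ioi).nullMeasurableSet)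
    ⟨0, ne_top_of_le_ne_top hfin (measure_mono fun x (hx : u 0 < f x) => (hu_lt 0).1.trans hx)⟩]
  exact le_iInf fun n => h _ (hu_lt n).2

theorem exists_measure_lt_le_le_measure_le (hf : Measurable f)
    (hfin : ∀ r : ℝ, 0 < r → μ {x | ENNReal.ofReal r < f x} ≠ ∞) {t : ℝ≥0∞}
    (ht : t ≤ μ univ) : ∃ b, μ {x | b < f x} ≤ t ∧ t ≤ μ {x | b ≤ f x} := by
  set S := {c | μ {x | c < f x} ≤ t}
  refine ⟨sInf S, measure_lt_le_of_forall_gt fun c hc => ?_, ?_⟩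
  · obtain ⟨c', hc'S, hc'c⟩ := sInf_lt_iff.1 hc
    exact (measure_mono fun x hx => hc'c.trans hx).trans hc'S
  have hlt : ∀ c < sInf S, t ≤ μ {x | c < f x} := fun c hc =>
    le_of_not_gt fun hcS => (sInf_le (show c ∈ S from hcS.le)).not_gt hc
  rcases eq_zero_or_pos (sInf S) with h0 | hpos
  · simpa [h0] using ht
  obtain ⟨r, -, hr0, hrb⟩ := ENNReal.lt_iff_exists_real_btwn.1 hpos
  exact le_measure_le_of_forall_lt hf hrb (hfin r (ENNReal.ofReal_pos.1 hr0)) hlt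

end Superlevel

theorem continuous_measure_closedBall {X : Type*} [PseudoMetricSpace X] [MeasurableSpace X]
    [OpensMeasurableSpace X] {ν : Measure X} (x : X) (hfin : ∀ r, ν (closedBall x r) ≠ ∞)
    (hsphere : ∀ r, ν (sphere x r) = 0) : Continuous fun r => ν (closedBall x r) := by
  refine continuous_iff_continuousAt.2 fun r => ?_
  refine tendsto_measure_of_ae_tendsto_indicator (𝓝 r) measurableSet_closedBall
    (fun _ => measurableSet_closedBall) measurableSet_closedBall (hfin (r + 1))
    ((gt_mem_nhds (lt_add_one r)).mono fun r' hr' => closedBall_subset_closedBall hr'.le) ?_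
  filter_upwards [measure_eq_zero_iff_ae_notMem.1 (hsphere r)] with y hy
  rw [mem_sphere] at hy
  rcases lt_or_gt_of_ne hy with hlt | hgt
  · filter_upwards [lt_mem_nhds hlt] with r' hr'
    simp only [mem_closedBall, hlt.le, hr'.le]
  · filter_upwards [gt_mem_nhds hgt] with r' hr'
    simp only [mem_closedBall, not_le.2 hgt, not_le.2 hr']

section AddHaar

variable {E : Type*} [NormedAddCommGroup E] [NormedSpace ℝ E] [FiniteDimensional ℝ E]
  [MeasurableSpace E] [BorelSpace E] [Nontrivial E] (μ : Measure E) [μ.IsAddHaarMeasure]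

theorem exists_subset_measure_eq {s : Set E} (hs : MeasurableSet s) {r : ℝ≥0∞} (hr : r ≤ μ s) :
    ∃ t ⊆ s, MeasurableSet t ∧ μ t = r := by
  rcases hr.eq_or_lt with rfl | hlt
  · exact ⟨s, Subset.rfl, hs, rfl⟩
  set ν := μ.restrict s
  have hcont : Continuous fun R => ν (closedBall 0 R) :=
    continuous_measure_closedBall 0
      (fun R => ((Measure.restrict_apply_le _ _).trans_lt measure_closedBall_lt_top).ne)
      (fun R => nonpos_iff_eq_zero.1 <|
        (Measure.restrict_apply_le _ _).trans (Measure.addHaar_sphere μ 0 R).le)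
  have hlim : Tendsto (fun n : ℕ => ν (closedBall 0 n)) atTop (𝓝 (μ s)) := by
    have := tendsto_measure_iUnion_atTop (μ := ν)
      (fun m n (hmn : m ≤ n) => closedBall_subset_closedBall (Nat.cast_le.2 hmn) :
        Monotone fun n : ℕ => closedBall (0 : E) n)
    rwa [iUnion_closedBall_nat, Measure.restrict_apply_univ] at this
  obtain ⟨N, hN⟩ := (hlim.eventually (lt_mem_nhds hlt)).exists
  have hempty : ν (closedBall 0 (-1)) = 0 := by
    rw [closedBall_eq_empty.2 (by norm_num), measure_empty]
  have hN_ge : (-1 : ℝ) ≤ N := by linarith [N.cast_nonneg (α := ℝ)]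
  obtain ⟨R, -, hR⟩ := intermediate_value_Icc hN_ge hcont.continuousOn ⟨hempty ▸ zero_le, hN.le⟩
  exact ⟨closedBall 0 R ∩ s, inter_subset_right, measurableSet_closedBall.inter hs,
    (Measure.restrict_apply measurableSet_closedBall).symm.trans hR⟩

theorem exists_between_superlevelSets_measure_eq {f : E → ℝ≥0∞} (hf : Measurable f)
    (hfin : ∀ r : ℝ, 0 < r → μ {x | ENNReal.ofReal r < f x} ≠ ∞) (t : ℝ≥0∞) :
    ∃ b A, MeasurableSet A ∧ μ A = t ∧ {x | b < f x} ⊆ A ∧ A ⊆ {x | b ≤ f x} := by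
  obtain ⟨b, hlt, hle⟩ := exists_measure_lt_le_le_measure_le hf hfin
    (le_top.trans_eq (measure_univ_of_isAddLeftInvariant μ).symm)
  have hlevel : t - μ {x | b < f x} ≤ μ {x | f x = b} := by
    rw [tsub_le_iff_left]
    calc t ≤ μ {x | b ≤ f x} := hle
      _ ≤ μ ({x | b < f x} ∪ {x | f x = b}) :=
          measure_mono fun x (hx : b ≤ f x) => hx.lt_or_eq.imp id Eq.symm
      _ ≤ _ := measure_union_le _ _
  obtain ⟨L, hLb, hL, hμL⟩ := exists_subset_measure_eq μ (hf (measurableSet_singleton b)) hlevel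
  refine ⟨b, {x | b < f x} ∪ L, (hf measurableSet_Ioi).union hL, ?_, subset_union_left,
    union_subset (fun x (hx : b < f x) => hx.le) fun x hx => (hLb hx).ge⟩
  rw [measure_union (disjoint_left.2 fun x hx hxL => hx.ne' (hLb hxL)) hL, hμL,
    add_tsub_cancel_of_le hlt]

theorem iSup_setLIntegral_measure_eq {f : E → ℝ≥0∞} (hf : Measurable f)
    (hfin : ∀ r : ℝ, 0 < r → μ {x | ENNReal.ofReal r < f x} ≠ ∞) (t : ℝ≥0∞) :
    ⨆ (A : Set E) (_ : MeasurableSet A ∧ μ A = t), ∫⁻ x in A, f x ∂μ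
      = ∫⁻ a in Ioi 0, min t (μ {x | ENNReal.ofReal a < f x}) := by
  refine le_antisymm (iSup₂_le fun A hA => ?_) ?_
  · rw [← hA.2]
    exact setLIntegral_le_lintegral_min_measure hf A
  · obtain ⟨b, A, hA, hμA, hbA, hAb⟩ := exists_between_superlevelSets_measure_eq μ hf hfin t
    have hA_eq := setLIntegral_eq_lintegral_min_measure (μ := μ) hf hbA hAb
    rw [hμA] at hA_eq
    rw [← hA_eq]
    exact le_iSup₂_of_le A ⟨hA, hμA⟩ le_rfl

end AddHaar

theorem setLIntegral_Ioo_eq_lintegral_min_measure {φ : ℝ → ℝ≥0∞}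
    (hφ : ∀ s t : ℝ, 0 < s → s ≤ t → φ t ≤ φ s) (t : ℝ) :
    ∫⁻ τ in Ioo 0 t, φ τ
      = ∫⁻ a in Ioi 0, min (ENNReal.ofReal t) (volume {s ∈ Ioi 0 | ENNReal.ofReal a < φ s}) := by
  -- extending `φ` by `∞` on `(-∞, 0]` makes it antitone on all of `ℝ`
  let g : ℝ → ℝ≥0∞ := fun s => if 0 < s then φ s else ∞
  have hg : Antitone g := by
    intro a b hab
    by_cases ha : 0 < a
    · simp [g, ha, ha.trans_le hab, hφ a b ha hab]
    · simp [g, ha]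
  have hIoo : ∫⁻ τ in Ioo 0 t, φ τ = ∫⁻ τ in Iio t, g τ ∂volume.restrict (Ioi 0) := by
    rw [Measure.restrict_restrict measurableSet_Iio, Iio_inter_Ioi]
    exact setLIntegral_congr_fun measurableSet_Ioo fun τ hτ => (if_pos hτ.1).symm
  rw [hIoo, setLIntegral_eq_lintegral_min_measure hg.measurable (A := Iio t) (b := g t)
    (fun τ hτ => lt_of_not_ge fun h => (hg h).not_gt hτ) (fun τ hτ => hg (le_of_lt hτ))]
  refine lintegral_congr fun a => ?_
  rw [Measure.restrict_apply measurableSet_Iio, Iio_inter_Ioi, Real.volume_Ioo, sub_zero,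
    Measure.restrict_apply
      (show MeasurableSet {τ | ENNReal.ofReal a < g τ} from hg.measurable measurableSet_Ioi)]
  congr 2
  ext τ
  by_cases hτ : 0 < τ <;> simp [g, hτ]

theorem bathtub_principle_general (d : ℕ) (hd : 1 ≤ d) (f : Euc d → ℝ≥0∞) (hf : Measurable f)
    (hfin : ∀ t : ℝ, 0 < t → volume {x | ENNReal.ofReal t < f x} < ⊤)
    (fstar : ℝ → ℝ≥0∞)
    (hanti : ∀ s t : ℝ, 0 < s → s ≤ t → fstar t ≤ fstar s)
    (hequi : ∀ᵐ α ∂(volume.restrict (Ioi (0:ℝ))),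
      volume {s ∈ Ioi (0:ℝ) | ENNReal.ofReal α < fstar s} = volume {x | ENNReal.ofReal α < f x})
    (t : ℝ) :
    ∫⁻ τ in Ioo (0:ℝ) t, fstar τ
      = ⨆ (A : Set (Euc d)) (_ : MeasurableSet A ∧ volume A = ENNReal.ofReal t),
          ∫⁻ x in A, f x := by
  have : Nontrivial (Euc d) := by
    have : Nonempty (Fin d) := ⟨⟨0, hd⟩⟩
    infer_instance
  rw [iSup_setLIntegral_measure_eq volume hf (fun r hr => (hfin r hr).ne),
    setLIntegral_Ioo_eq_lintegral_min_measure hanti]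
  exact lintegral_congr_ae (hequi.mono fun a ha => congrArg (min _) ha)

/-- Bathtub principle: the integral of the decreasing rearrangement `fstar` over `(0,t)`
equals the supremum of `∫_A f` over measurable sets `A` with `|A| = t`. -/
theorem bathtub_principle (d : ℕ) (hd : 1 ≤ d) (f : Euc d → ℝ≥0∞) (hf : Measurable f)
    (hfin : ∀ t : ℝ, 0 < t → volume {x | ENNReal.ofReal t < f x} < ⊤)
    (fstar : ℝ → ℝ≥0∞)
    (hanti : ∀ s t : ℝ, 0 < s → s ≤ t → fstar t ≤ fstar s)
    (hrc : ∀ t : ℝ, 0 < t → ContinuousWithinAt fstar (Ici t) t)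
    (hequi : ∀ᵐ α ∂(volume.restrict (Ioi (0:ℝ))),
      volume {s ∈ Ioi (0:ℝ) | ENNReal.ofReal α < fstar s} = volume {x | ENNReal.ofReal α < f x})
    (t : ℝ) (ht : 0 < t) :
    ∫⁻ τ in Ioo (0:ℝ) t, fstar τ
      = ⨆ (A : Set (Euc d)) (_ : MeasurableSet A ∧ volume A = ENNReal.ofReal t),
          ∫⁻ x in A, f x :=
  bathtub_principle_general d hd f hf hfin fstar hanti hequi t
end
end

section
/- Let g, h : (0,∞) → [0,∞) be nonincreasing right-continuous functions, with G(t) = ∫_0^t g and H(t) = ∫_0^t h. If G(t) ≤ H(t) for all t > 0, then for any integer k ≥ 2, ∫_0^∞ g^k ≤ ∫_0^∞ g^{k-1} h (assuming all integrals are finite). -/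
open MeasureTheory Set

private lemma meas_indicator_antitone (g : ℝ → ℝ)
    (hganti : ∀ s t : ℝ, 0 < s → s ≤ t → g t ≤ g s) :
    Measurable ((Ioi (0:ℝ)).indicator g) := by
  apply measurable_of_Ioi
  intro a
  have hoc : MeasurableSet {t : ℝ | 0 < t ∧ a < g t} := by
    apply Set.OrdConnected.measurableSet
    constructor
    rintro x ⟨hx0, _⟩ y ⟨hy0, hyg⟩ z ⟨hxz, hzy⟩
    have hz0 : 0 < z := lt_of_lt_of_le hx0 hxz
    exact ⟨hz0, lt_of_lt_of_le hyg (hganti z y hz0 hzy)⟩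
  rcases le_or_gt 0 a with ha | ha
  · have he : (Ioi (0:ℝ)).indicator g ⁻¹' Ioi a = {t | 0 < t ∧ a < g t} := by
      ext t
      simp only [mem_preimage, mem_Ioi, mem_setOf_eq, indicator_apply]
      by_cases ht : 0 < t
      · rw [if_pos ht]
        exact ⟨fun hh => ⟨ht, hh⟩, fun hh => hh.2⟩
      · rw [if_neg ht]
        rw [not_lt] at ht
        constructor
        · intro hcon; linarith
        · rintro ⟨h1, _⟩; linarith
    rw [he]; exact hoc
  · have he : (Ioi (0:ℝ)).indicator g ⁻¹' Ioi a = Iic 0 ∪ {t | 0 < t ∧ a < g t} := by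
      ext t
      simp only [mem_preimage, mem_Ioi, mem_union, mem_Iic, mem_setOf_eq, indicator_apply]
      by_cases ht : 0 < t
      · rw [if_pos ht]
        exact ⟨fun hh => Or.inr ⟨ht, hh⟩,
          fun hh => hh.elim (fun h1 => absurd ht (not_lt.mpr h1)) fun h1 => h1.2⟩
      · rw [if_neg ht]
        rw [not_lt] at ht
        exact ⟨fun _ => Or.inl ht, fun _ => ha⟩
    rw [he]; exact measurableSet_Iic.union hoc

private lemma measure_le_of_downward (μ ν : Measure ℝ)
    (hμs : ∀ a : ℝ, μ {a} = 0)
    (hμν : ∀ a : ℝ, 0 < a → μ (Ioo 0 a) ≤ ν (Ioo 0 a))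
    (A : Set ℝ) (hA : A ⊆ Ioi 0)
    (hdc : ∀ t ∈ A, ∀ s : ℝ, 0 < s → s ≤ t → s ∈ A) :
    μ A ≤ ν A := by
  rcases A.eq_empty_or_nonempty with rfl | hne
  · simp
  by_cases hbdd : BddAbove A
  · obtain ⟨x₀, hx₀⟩ := hne
    set a := sSup A with ha_def
    have ha0 : 0 < a := lt_of_lt_of_le (hA hx₀) (le_csSup hbdd hx₀)
    have h1 : Ioo 0 a ⊆ A := by
      intro t ht
      obtain ⟨x, hx, htx⟩ := exists_lt_of_lt_csSup ⟨x₀, hx₀⟩ ht.2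
      exact hdc x hx t ht.1 htx.le
    have h2 : A ⊆ Ioo 0 a ∪ {a} := by
      intro t ht
      rcases lt_or_eq_of_le (le_csSup hbdd ht) with hlt | heq
      · exact Or.inl ⟨hA ht, hlt⟩
      · exact Or.inr heq
    calc μ A ≤ μ (Ioo 0 a ∪ {a}) := measure_mono h2
      _ ≤ μ (Ioo 0 a) + μ {a} := measure_union_le _ _
      _ = μ (Ioo 0 a) := by rw [hμs a, add_zero]
      _ ≤ ν (Ioo 0 a) := hμν a ha0
      _ ≤ ν A := measure_mono h1
  · have hAeq : A = Ioi 0 := by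
      refine Subset.antisymm hA fun t ht => ?_
      obtain ⟨x, hx, htx⟩ := not_bddAbove_iff.mp hbdd t
      exact hdc x hx t ht htx.le
    have hU : Ioi (0:ℝ) = ⋃ n : ℕ, Ioo 0 (n:ℝ) := by
      ext t
      simp only [mem_Ioi, mem_iUnion, mem_Ioo]
      constructor
      · intro ht; obtain ⟨n, hn⟩ := exists_nat_gt t; exact ⟨n, ht, hn⟩
      · rintro ⟨n, h1, _⟩; exact h1
    rw [hAeq, hU, Monotone.measure_iUnion
      (fun m n hmn => Ioo_subset_Ioo_right (by exact_mod_cast hmn))]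
    apply iSup_le
    intro n
    rcases Nat.eq_zero_or_pos n with h0 | h0
    · simp [h0]
    · exact (hμν n (by exact_mod_cast h0)).trans
        (measure_mono (subset_iUnion (fun n : ℕ => Ioo (0:ℝ) (n:ℝ)) n))

private lemma wd_Ioo (φ : ℝ → ℝ) (hφ0 : ∀ t : ℝ, 0 < t → 0 ≤ φ t)
    (hφint : IntegrableOn φ (Ioi (0:ℝ))) (a : ℝ) :
    (volume.restrict (Ioi (0:ℝ))).withDensity
        (fun t => ENNReal.ofReal ((Ioi (0:ℝ)).indicator φ t)) (Ioo 0 a)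
      = ENNReal.ofReal (∫ t in Ioo (0:ℝ) a, φ t) := by
  rw [withDensity_apply _ measurableSet_Ioo, Measure.restrict_restrict measurableSet_Ioo,
    inter_eq_self_of_subset_left Ioo_subset_Ioi_self]
  have hcong : ∫⁻ t, ENNReal.ofReal ((Ioi (0:ℝ)).indicator φ t) ∂(volume.restrict (Ioo 0 a))
      = ∫⁻ t, ENNReal.ofReal (φ t) ∂(volume.restrict (Ioo 0 a)) := by
    apply lintegral_congr_ae
    filter_upwards [ae_restrict_mem measurableSet_Ioo] with t ht
    rw [indicator_of_mem (Ioo_subset_Ioi_self ht)]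
  rw [hcong, ← ofReal_integral_eq_lintegral_ofReal (hφint.mono_set Ioo_subset_Ioi_self)]
  exact (ae_restrict_iff' measurableSet_Ioo).mpr (ae_of_all _ fun t ht => hφ0 t ht.1)

/-- Integration-by-parts step: if the cumulative integrals satisfy `G ≤ H` pointwise on
`(0,∞)` for nonincreasing right-continuous nonnegative `g, h`, then
`∫ g^k ≤ ∫ g^(k-1) h` (all integrals assumed finite). -/
theorem int_pow_le_int_pow_mul (g h : ℝ → ℝ)
    (hg0 : ∀ t : ℝ, 0 < t → 0 ≤ g t) (hh0 : ∀ t : ℝ, 0 < t → 0 ≤ h t)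
    (hganti : ∀ s t : ℝ, 0 < s → s ≤ t → g t ≤ g s)
    (hhanti : ∀ s t : ℝ, 0 < s → s ≤ t → h t ≤ h s)
    (hgrc : ∀ t : ℝ, 0 < t → ContinuousWithinAt g (Ici t) t)
    (hhrc : ∀ t : ℝ, 0 < t → ContinuousWithinAt h (Ici t) t)
    (hgint : IntegrableOn g (Ioi (0:ℝ))) (hhint : IntegrableOn h (Ioi (0:ℝ)))
    (hGH : ∀ t : ℝ, 0 < t → ∫ τ in Ioo (0:ℝ) t, g τ ≤ ∫ τ in Ioo (0:ℝ) t, h τ)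
    (k : ℕ) (hk : 2 ≤ k)
    (hint1 : IntegrableOn (fun t => g t ^ k) (Ioi (0:ℝ)))
    (hint2 : IntegrableOn (fun t => g t ^ (k-1) * h t) (Ioi (0:ℝ))) :
    ∫ t in Ioi (0:ℝ), g t ^ k ≤ ∫ t in Ioi (0:ℝ), g t ^ (k-1) * h t := by
  have hkk : k - 1 + 1 = k := by omega
  have hk1 : k - 1 ≠ 0 := by omega
  set g₀ : ℝ → ℝ := (Ioi (0:ℝ)).indicator g with hg₀def
  set h₀ : ℝ → ℝ := (Ioi (0:ℝ)).indicator h with hh₀def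
  have hg₀m : Measurable g₀ := meas_indicator_antitone g hganti
  have hh₀m : Measurable h₀ := meas_indicator_antitone h hhanti
  have hg₀eq : ∀ t ∈ Ioi (0:ℝ), g₀ t = g t := fun t ht => indicator_of_mem ht g
  have hh₀eq : ∀ t ∈ Ioi (0:ℝ), h₀ t = h t := fun t ht => indicator_of_mem ht h
  have hg₀0 : ∀ t, 0 ≤ g₀ t := fun t =>
    indicator_nonneg (fun a ha => hg0 a (mem_Ioi.mp ha)) t
  have hg₀z : ∀ t : ℝ, t ≤ 0 → g₀ t = 0 := fun t ht =>
    indicator_of_notMem (by simpa using ht) g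
  set base := volume.restrict (Ioi (0:ℝ)) with hbase
  set μ := base.withDensity (fun t => ENNReal.ofReal (g₀ t)) with hμdef
  set ν := base.withDensity (fun t => ENNReal.ofReal (h₀ t)) with hνdef
  -- finiteness
  have hfin : ∀ (φ : ℝ → ℝ), IntegrableOn φ (Ioi (0:ℝ)) →
      ∀ (φ₀ : ℝ → ℝ), (∀ t ∈ Ioi (0:ℝ), φ₀ t = φ t) →
      IsFiniteMeasure (base.withDensity (fun t => ENNReal.ofReal (φ₀ t))) := by
    intro φ hφ φ₀ hφ₀
    constructor
    rw [withDensity_apply _ MeasurableSet.univ, Measure.restrict_univ]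
    calc ∫⁻ t, ENNReal.ofReal (φ₀ t) ∂base ≤ ∫⁻ t, (‖φ t‖₊ : ENNReal) ∂base := by
          apply lintegral_mono_ae
          filter_upwards [ae_restrict_mem measurableSet_Ioi] with t ht
          rw [hφ₀ t ht]
          exact Real.ofReal_le_enorm _
      _ < ⊤ := hφ.2
  haveI hμfin : IsFiniteMeasure μ := hfin g hgint g₀ hg₀eq
  haveI hνfin : IsFiniteMeasure ν := hfin h hhint h₀ hh₀eq
  -- singletons are null
  have hμs : ∀ x : ℝ, μ {x} = 0 := by
    intro x
    apply withDensity_absolutelyContinuous base _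
    rw [hbase, Measure.restrict_apply (measurableSet_singleton x)]
    exact measure_mono_null (inter_subset_left) (measure_singleton x)
  -- the key comparison on intervals
  have hIoo : ∀ a : ℝ, 0 < a → μ (Ioo 0 a) ≤ ν (Ioo 0 a) := by
    intro a ha
    rw [hμdef, hνdef, wd_Ioo g hg0 hgint a, wd_Ioo h hh0 hhint a]
    exact ENNReal.ofReal_le_ofReal (hGH a ha)
  -- the weight function
  set f : ℝ → ℝ := fun t => g₀ t ^ (k-1) with hfdef
  have hfm : Measurable f := hg₀m.pow_const _
  have hf0 : ∀ t, 0 ≤ f t := fun t => pow_nonneg (hg₀0 t) _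
  -- level sets of f are "downward closed" subsets of (0, ∞)
  have hlevel : ∀ s : ℝ, 0 < s → μ {a : ℝ | s < f a} ≤ ν {a : ℝ | s < f a} := by
    intro s hs
    apply measure_le_of_downward μ ν hμs hIoo
    · intro a haA
      simp only [mem_setOf_eq] at haA
      by_contra hcon
      simp only [mem_Ioi, not_lt] at hcon
      rw [hfdef] at haA
      simp only at haA
      rw [hg₀z a hcon, zero_pow hk1] at haA
      linarith
    · intro t htA s' hs'0 hs't
      simp only [mem_setOf_eq] at htA ⊢
      have ht0 : 0 < t := lt_of_lt_of_le hs'0 hs't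
      have : f t ≤ f s' := by
        rw [hfdef]
        simp only
        rw [hg₀eq t ht0, hg₀eq s' hs'0]
        exact pow_le_pow_left₀ (hg0 t ht0) (hganti s' t hs'0 hs't) _
      linarith
  -- identify the two lintegrals with layer-cake integrals
  have hLg : ∫⁻ t in Ioi (0:ℝ), ENNReal.ofReal (g t ^ k)
      = ∫⁻ t, ENNReal.ofReal (f t) ∂μ := by
    rw [hμdef, lintegral_withDensity_eq_lintegral_mul base
      hg₀m.ennreal_ofReal hfm.ennreal_ofReal]
    apply lintegral_congr_ae
    filter_upwards [ae_restrict_mem measurableSet_Ioi] with t ht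
    have ht' := mem_Ioi.mp ht
    simp only [Pi.mul_apply, Function.comp_apply, hfdef]
    rw [hg₀eq t ht, ← ENNReal.ofReal_mul (hg0 t ht'), mul_comm (g t), ← pow_succ, hkk]
  have hLh : ∫⁻ t in Ioi (0:ℝ), ENNReal.ofReal (g t ^ (k-1) * h t)
      = ∫⁻ t, ENNReal.ofReal (f t) ∂ν := by
    rw [hνdef, lintegral_withDensity_eq_lintegral_mul base
      hh₀m.ennreal_ofReal hfm.ennreal_ofReal]
    apply lintegral_congr_ae
    filter_upwards [ae_restrict_mem measurableSet_Ioi] with t ht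
    have ht' := mem_Ioi.mp ht
    simp only [Pi.mul_apply, Function.comp_apply, hfdef]
    rw [hg₀eq t ht, hh₀eq t ht, ← ENNReal.ofReal_mul (hh0 t ht'), mul_comm (h t)]
  have hmain : ∫⁻ t in Ioi (0:ℝ), ENNReal.ofReal (g t ^ k)
      ≤ ∫⁻ t in Ioi (0:ℝ), ENNReal.ofReal (g t ^ (k-1) * h t) := by
    rw [hLg, hLh,
      lintegral_eq_lintegral_meas_lt μ (ae_of_all _ hf0) hfm.aemeasurable,
      lintegral_eq_lintegral_meas_lt ν (ae_of_all _ hf0) hfm.aemeasurable]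
    apply lintegral_mono_ae
    filter_upwards [ae_restrict_mem measurableSet_Ioi] with s hs
    exact hlevel s (mem_Ioi.mp hs)
  -- convert back to Bochner integrals
  have nn1 : 0 ≤ᵐ[volume.restrict (Ioi (0:ℝ))] fun t => g t ^ k :=
    (ae_restrict_iff' measurableSet_Ioi).mpr
      (ae_of_all _ fun t ht => pow_nonneg (hg0 t (mem_Ioi.mp ht)) _)
  have nn2 : 0 ≤ᵐ[volume.restrict (Ioi (0:ℝ))] fun t => g t ^ (k-1) * h t :=
    (ae_restrict_iff' measurableSet_Ioi).mpr
      (ae_of_all _ fun t ht =>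
        mul_nonneg (pow_nonneg (hg0 t (mem_Ioi.mp ht)) _) (hh0 t (mem_Ioi.mp ht)))
  rw [integral_eq_lintegral_of_nonneg_ae nn1 hint1.1,
    integral_eq_lintegral_of_nonneg_ae nn2 hint2.1]
  apply ENNReal.toReal_mono _ hmain
  exact ne_of_lt (lt_of_le_of_lt
    (lintegral_mono fun t => Real.ofReal_le_enorm _) hint2.2)
end

section
/- Let g, h : (0,∞) → [0,∞) be nonincreasing right-continuous integrable functions with ∫_0^t g ≤ ∫_0^t h for all t > 0. Then for every integer k ≥ 1 and every 0 ≤ j ≤ k, ∫_0^∞ g^{k-j} h^j ≤ ∫_0^∞ g^{k-j-1} h^{j+1} for 0 ≤ j ≤ k-1; in particular ∫_0^∞ g^k ≤ ∫_0^∞ h^k. -/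
open MeasureTheory Set
open scoped ENNReal

/-! Put `φ = g^(k-j-1) h^j`, which is nonnegative and nonincreasing on `(0, ∞)`; each step of the
chain is then `∫ φ g ≤ ∫ φ h`. By the layer cake formula both sides are integrals over `s > 0`
of the masses that the measures `g dt` and `h dt` give to the superlevel sets `{φ > s}`. These
sets are initial segments of `(0, ∞)`, up to an endpoint that carries no mass, and on initial
segments the hypothesis `∫_0^t g ≤ ∫_0^t h` is exactly the comparison of the two measures. -/

theorem AntitoneOn.pow_mul_pow {α R : Type*} [Preorder α] [Semiring R] [PartialOrder R]
    [IsOrderedRing R] {f g : α → R} {s : Set α} (hf : AntitoneOn f s) (hg : AntitoneOn g s)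
    (hf0 : ∀ x ∈ s, 0 ≤ f x) (hg0 : ∀ x ∈ s, 0 ≤ g x) (m n : ℕ) :
    AntitoneOn (fun x ↦ f x ^ m * g x ^ n) s := fun _ ha _ hb hab ↦
  mul_le_mul (pow_le_pow_left₀ (hf0 _ hb) (hf ha hb hab) m)
    (pow_le_pow_left₀ (hg0 _ hb) (hg ha hb hab) n) (pow_nonneg (hg0 _ hb) n)
    (pow_nonneg (hf0 _ ha) m)

section

variable {μ ν : Measure ℝ} [NullSingletonClass μ]

theorem measure_Iic_le_of_forall_measure_Iio_le (hμν : ∀ a, μ (Iio a) ≤ ν (Iio a)) (a : ℝ) :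
    μ (Iic a) ≤ ν (Iic a) :=
  calc μ (Iic a) = μ (Iio a) := measure_congr Iio_ae_eq_Iic.symm
    _ ≤ ν (Iio a) := hμν a
    _ ≤ ν (Iic a) := measure_mono Iio_subset_Iic_self

theorem IsLowerSet.measure_le_of_forall_measure_Iio_le (hμν : ∀ a, μ (Iio a) ≤ ν (Iio a))
    {L : Set ℝ} (hL : IsLowerSet L) : μ L ≤ ν L := by
  rcases L.eq_empty_or_nonempty with rfl | hne
  · simp
  by_cases hbdd : BddAbove L
  · have hIio : Iio (sSup L) ⊆ L := fun y hy ↦ by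
      obtain ⟨x, hxL, hyx⟩ := exists_lt_of_lt_csSup hne hy
      exact hL hyx.le hxL
    calc μ L ≤ μ (Iic (sSup L)) := measure_mono fun x hx ↦ le_csSup hbdd hx
      _ = μ (Iio (sSup L)) := measure_congr Iio_ae_eq_Iic.symm
      _ ≤ ν (Iio (sSup L)) := hμν _
      _ ≤ ν L := measure_mono hIio
  · have hL_univ : L = univ := eq_univ_of_forall fun y ↦ by
      obtain ⟨x, hxL, hyx⟩ := not_bddAbove_iff.1 hbdd y
      exact hL hyx.le hxL
    rw [hL_univ]
    exact le_of_tendsto_of_tendsto' (tendsto_measure_Iic_atTop μ) (tendsto_measure_Iic_atTop ν)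
      (measure_Iic_le_of_forall_measure_Iio_le hμν)

theorem lintegral_le_of_antitoneOn_Ioi (hμν : ∀ a, μ (Iio a) ≤ ν (Iio a))
    (hμ : μ (Iic 0) = 0) (hν : ν (Iic 0) = 0) {φ : ℝ → ℝ} (hφ0 : ∀ t ∈ Ioi (0 : ℝ), 0 ≤ φ t)
    (hφ : AntitoneOn φ (Ioi 0)) :
    ∫⁻ t, ENNReal.ofReal (φ t) ∂μ ≤ ∫⁻ t, ENNReal.ofReal (φ t) ∂ν := by
  have hae_pos : ∀ {ρ : Measure ℝ}, ρ (Iic 0) = 0 → ∀ᵐ t ∂ρ, t ∈ Ioi (0 : ℝ) := fun hρ ↦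
    measure_mono_null (fun t (ht : ¬ 0 < t) ↦ not_lt.1 ht) hρ
  have hmeas : ∀ {ρ : Measure ℝ}, ρ (Iic 0) = 0 → AEMeasurable φ ρ := fun hρ ↦ by
    rw [← Measure.restrict_eq_self_of_ae_mem (hae_pos hρ)]
    exact aemeasurable_restrict_of_antitoneOn measurableSet_Ioi hφ
  have hnonneg : ∀ {ρ : Measure ℝ}, ρ (Iic 0) = 0 → 0 ≤ᵐ[ρ] φ := fun hρ ↦
    (hae_pos hρ).mono hφ0
  rw [lintegral_eq_lintegral_meas_lt μ (hnonneg hμ) (hmeas hμ),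
    lintegral_eq_lintegral_meas_lt ν (hnonneg hν) (hmeas hν)]
  refine lintegral_mono fun s ↦ ?_
  have hL : IsLowerSet ({t | s < φ t} ∪ Iic 0) := by
    rintro x y hyx (hx | hx)
    · rcases le_or_gt y 0 with hy | hy
      · exact Or.inr hy
      · exact Or.inl (hx.trans_le (hφ hy (hy.trans_le hyx) hyx))
    · exact Or.inr (hyx.trans hx)
  calc μ {t | s < φ t} ≤ μ ({t | s < φ t} ∪ Iic 0) := measure_mono subset_union_left
    _ ≤ ν ({t | s < φ t} ∪ Iic 0) := hL.measure_le_of_forall_measure_Iio_le hμν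
    _ ≤ ν {t | s < φ t} + ν (Iic 0) := measure_union_le _ _
    _ = ν {t | s < φ t} := by rw [hν, add_zero]

end

noncomputable def densityOnIoi (g : ℝ → ℝ) : Measure ℝ :=
  (volume.restrict (Ioi 0)).withDensity fun t ↦ ENNReal.ofReal (g t)

instance (g : ℝ → ℝ) : NullSingletonClass (densityOnIoi g) := by
  unfold densityOnIoi; infer_instance

theorem densityOnIoi_Iic_zero (g : ℝ → ℝ) : densityOnIoi g (Iic 0) = 0 :=
  withDensity_absolutelyContinuous _ _ <| by
    rw [Measure.restrict_apply measurableSet_Iic, Iic_inter_Ioi, Ioc_self, measure_empty]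

section densityOnIoi

variable {g : ℝ → ℝ}

theorem densityOnIoi_Iio (hg0 : ∀ t ∈ Ioi (0 : ℝ), 0 ≤ g t) (hg : IntegrableOn g (Ioi 0))
    (a : ℝ) : densityOnIoi g (Iio a) = ENNReal.ofReal (∫ t in Ioo 0 a, g t) := by
  rw [densityOnIoi, withDensity_apply _ measurableSet_Iio,
    Measure.restrict_restrict measurableSet_Iio, Iio_inter_Ioi,
    ofReal_integral_eq_lintegral_ofReal (hg.mono_set Ioo_subset_Ioi_self)
      ((ae_restrict_iff' measurableSet_Ioo).2 (ae_of_all _ fun t ht ↦ hg0 t ht.1))]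

theorem lintegral_densityOnIoi (hg0 : ∀ t ∈ Ioi (0 : ℝ), 0 ≤ g t) (hg : IntegrableOn g (Ioi 0))
    (φ : ℝ → ℝ) :
    ∫⁻ t, ENNReal.ofReal (φ t) ∂densityOnIoi g = ∫⁻ t in Ioi 0, ENNReal.ofReal (φ t * g t) := by
  rw [densityOnIoi, lintegral_withDensity_eq_lintegral_mul_non_measurable₀ _
    hg.aemeasurable.ennreal_ofReal (ae_of_all _ fun _ ↦ ENNReal.ofReal_lt_top)]
  refine setLIntegral_congr_fun measurableSet_Ioi fun t ht ↦ ?_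
  rw [Pi.mul_apply, ENNReal.ofReal_mul' (hg0 t ht), mul_comm]

end densityOnIoi

theorem setLIntegral_mul_le_of_forall_integral_Ioo_le {g h φ : ℝ → ℝ}
    (hg0 : ∀ t ∈ Ioi (0 : ℝ), 0 ≤ g t) (hh0 : ∀ t ∈ Ioi (0 : ℝ), 0 ≤ h t)
    (hg : IntegrableOn g (Ioi 0)) (hh : IntegrableOn h (Ioi 0))
    (hgh : ∀ t, 0 < t → ∫ τ in Ioo 0 t, g τ ≤ ∫ τ in Ioo 0 t, h τ)
    (hφ0 : ∀ t ∈ Ioi (0 : ℝ), 0 ≤ φ t) (hφ : AntitoneOn φ (Ioi 0)) :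
    ∫⁻ t in Ioi 0, ENNReal.ofReal (φ t * g t) ≤ ∫⁻ t in Ioi 0, ENNReal.ofReal (φ t * h t) := by
  rw [← lintegral_densityOnIoi hg0 hg, ← lintegral_densityOnIoi hh0 hh]
  refine lintegral_le_of_antitoneOn_Ioi (fun a ↦ ?_) (densityOnIoi_Iic_zero g)
    (densityOnIoi_Iic_zero h) hφ0 hφ
  rw [densityOnIoi_Iio hg0 hg, densityOnIoi_Iio hh0 hh]
  rcases le_or_gt a 0 with ha | ha
  · simp [Ioo_eq_empty_of_le ha]
  · exact ENNReal.ofReal_le_ofReal (hgh a ha)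

theorem chain_of_inequalities_general (g h : ℝ → ℝ)
    (hg0 : ∀ t : ℝ, 0 < t → 0 ≤ g t) (hh0 : ∀ t : ℝ, 0 < t → 0 ≤ h t)
    (hganti : ∀ s t : ℝ, 0 < s → s ≤ t → g t ≤ g s)
    (hhanti : ∀ s t : ℝ, 0 < s → s ≤ t → h t ≤ h s)
    (hgint : IntegrableOn g (Ioi (0:ℝ))) (hhint : IntegrableOn h (Ioi (0:ℝ)))
    (hGH : ∀ t : ℝ, 0 < t → ∫ τ in Ioo (0:ℝ) t, g τ ≤ ∫ τ in Ioo (0:ℝ) t, h τ)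
    (k : ℕ) (hk : 1 ≤ k) :
    (∀ j : ℕ, j ≤ k - 1 →
      ∫⁻ t in Ioi (0:ℝ), ENNReal.ofReal (g t ^ (k - j) * h t ^ j)
        ≤ ∫⁻ t in Ioi (0:ℝ), ENNReal.ofReal (g t ^ (k - j - 1) * h t ^ (j + 1))) ∧
    ∫⁻ t in Ioi (0:ℝ), ENNReal.ofReal (g t ^ k)
      ≤ ∫⁻ t in Ioi (0:ℝ), ENNReal.ofReal (h t ^ k) := by
  have hg : AntitoneOn g (Ioi 0) := fun s hs t _ hst ↦ hganti s t hs hst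
  have hh : AntitoneOn h (Ioi 0) := fun s hs t _ hst ↦ hhanti s t hs hst
  have step : ∀ j : ℕ, j ≤ k - 1 →
      ∫⁻ t in Ioi (0:ℝ), ENNReal.ofReal (g t ^ (k - j) * h t ^ j)
        ≤ ∫⁻ t in Ioi (0:ℝ), ENNReal.ofReal (g t ^ (k - j - 1) * h t ^ (j + 1)) := by
    intro j hj
    obtain ⟨m, hm⟩ : ∃ m, k - j = m + 1 := ⟨k - j - 1, by omega⟩
    have := setLIntegral_mul_le_of_forall_integral_Ioo_le hg0 hh0 hgint hhint hGH
      (fun t ht ↦ mul_nonneg (pow_nonneg (hg0 t ht) m) (pow_nonneg (hh0 t ht) j))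
      (hg.pow_mul_pow hh hg0 hh0 m j)
    rw [hm, Nat.add_sub_cancel]
    convert this using 4 <;> ring
  refine ⟨step, ?_⟩
  have chain : ∀ j ≤ k, ∫⁻ t in Ioi (0:ℝ), ENNReal.ofReal (g t ^ k)
      ≤ ∫⁻ t in Ioi (0:ℝ), ENNReal.ofReal (g t ^ (k - j) * h t ^ j) := by
    intro j hj
    induction j with
    | zero => simp
    | succ j ih => simpa only [Nat.sub_sub] using (ih (by omega)).trans (step j (by omega))
  simpa using chain k le_rfl

/-- The chain of inequalities `∫ g^k ≤ ∫ g^(k-1) h ≤ ⋯ ≤ ∫ h^k` obtained by iteratively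
converting one factor of `g` into a factor of `h`. -/
theorem chain_of_inequalities (g h : ℝ → ℝ)
    (hg0 : ∀ t : ℝ, 0 < t → 0 ≤ g t) (hh0 : ∀ t : ℝ, 0 < t → 0 ≤ h t)
    (hganti : ∀ s t : ℝ, 0 < s → s ≤ t → g t ≤ g s)
    (hhanti : ∀ s t : ℝ, 0 < s → s ≤ t → h t ≤ h s)
    (hgrc : ∀ t : ℝ, 0 < t → ContinuousWithinAt g (Ici t) t)
    (hhrc : ∀ t : ℝ, 0 < t → ContinuousWithinAt h (Ici t) t)
    (hgint : IntegrableOn g (Ioi (0:ℝ))) (hhint : IntegrableOn h (Ioi (0:ℝ)))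
    (hGH : ∀ t : ℝ, 0 < t → ∫ τ in Ioo (0:ℝ) t, g τ ≤ ∫ τ in Ioo (0:ℝ) t, h τ)
    (k : ℕ) (hk : 1 ≤ k) :
    (∀ j : ℕ, j ≤ k - 1 →
      ∫⁻ t in Ioi (0:ℝ), ENNReal.ofReal (g t ^ (k - j) * h t ^ j)
        ≤ ∫⁻ t in Ioi (0:ℝ), ENNReal.ofReal (g t ^ (k - j - 1) * h t ^ (j + 1))) ∧
    ∫⁻ t in Ioi (0:ℝ), ENNReal.ofReal (g t ^ k)
      ≤ ∫⁻ t in Ioi (0:ℝ), ENNReal.ofReal (h t ^ k) :=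
  chain_of_inequalities_general g h hg0 hh0 hganti hhanti hgint hhint hGH k hk
end
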